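/- Let γ = 2/α with α > 2 and let W be a nonnegative random variable with density w whose Laplace transform is E[e^(-θW)] = exp(-C θ^γ) with C = π Γ(1-γ). Then 2π ∫₀^∞ P(W < r^(-α)/β) r dr = (sin(πγ)/(πγ)) β^(-γ), i.e., the average reception area at unit density equals sin(2π/α)/(2π/α) · β^(-2/α). -/

import Mathlib

open MeasureTheory Real

open Set Filter in
private lemma aux_gamma_lintegral {a x : ℝ} (ha : 0 < a) (hx : 0 < x) :
    ∫⁻ θ in Set.Ioi (0:ℝ), ENNReal.ofReal (θ ^ (a - 1) * Real.exp (-θ * x)) =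
      ENNReal.ofReal (Real.Gamma a * x ^ (-a)) := by
  have hint : IntegrableOn (fun θ : ℝ => θ ^ (a - 1) * Real.exp (-(x * θ))) (Set.Ioi 0) := by
    have h0 : IntegrableOn (fun u : ℝ => Real.exp (-u) * u ^ (a - 1)) (Set.Ioi 0) :=
      Real.GammaIntegral_convergent ha
    have h1 : IntegrableOn (fun θ : ℝ =>
        (fun u => Real.exp (-u) * u ^ (a - 1)) (x * θ)) (Set.Ioi 0) :=
      (integrableOn_Ioi_comp_mul_left_iff (fun u => Real.exp (-u) * u ^ (a - 1)) 0 hx).2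
        (by simpa using h0)
    have h2 := h1.smul (x ^ ((1:ℝ) - a))
    refine (integrableOn_congr_fun (fun θ hθ => ?_) measurableSet_Ioi).mp h2
    have hθ0 : (0:ℝ) < θ := hθ
    simp only [Pi.smul_apply, smul_eq_mul]
    rw [Real.mul_rpow hx.le hθ0.le]
    rw [show x ^ ((1:ℝ) - a) * (Real.exp (-(x * θ)) * (x ^ (a-1) * θ ^ (a-1)))
        = (x ^ ((1:ℝ) - a) * x ^ (a-1)) * (θ ^ (a-1) * Real.exp (-(x * θ))) by ring,
      ← Real.rpow_add hx]
    norm_num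
  have hnn : 0 ≤ᵐ[volume.restrict (Set.Ioi (0:ℝ))]
      (fun θ : ℝ => θ ^ (a - 1) * Real.exp (-(x * θ))) := by
    refine (ae_restrict_iff' measurableSet_Ioi).2 (Filter.Eventually.of_forall fun θ hθ => ?_)
    have : (0:ℝ) < θ := hθ
    positivity
  have := ofReal_integral_eq_lintegral_ofReal hint hnn
  rw [integral_rpow_mul_exp_neg_mul_Ioi ha hx] at this
  rw [show (fun θ : ℝ => ENNReal.ofReal (θ ^ (a - 1) * Real.exp (-θ * x)))
      = fun θ : ℝ => ENNReal.ofReal (θ ^ (a - 1) * Real.exp (-(x * θ))) by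
    funext θ; ring_nf]
  rw [← this]
  congr 1
  rw [one_div, Real.inv_rpow hx.le, ← Real.rpow_neg hx.le, mul_comm]

private lemma aux_ioo {R : ℝ} (hR : 0 ≤ R) :
    ∫⁻ r in Set.Ioo (0:ℝ) R, ENNReal.ofReal r = ENNReal.ofReal (R ^ 2 / 2) := by
  have hint : IntegrableOn (fun r : ℝ => r) (Set.Ioo 0 R) := by
    have : IntervalIntegrable (fun r : ℝ => r) volume 0 R := intervalIntegral.intervalIntegrable_id
    exact ((intervalIntegrable_iff_integrableOn_Ioc_of_le hR).1 this).mono_set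
      Set.Ioo_subset_Ioc_self
  have hnn : 0 ≤ᵐ[volume.restrict (Set.Ioo (0:ℝ) R)] (fun r : ℝ => r) :=
    (ae_restrict_iff' measurableSet_Ioo).2 (Filter.Eventually.of_forall fun r hr => hr.1.le)
  rw [← ofReal_integral_eq_lintegral_ofReal hint hnn]
  congr 1
  rw [← MeasureTheory.integral_Ioc_eq_integral_Ioo, ← intervalIntegral.integral_of_le hR,
    integral_id]
  norm_num

theorem stmt_2 {Ω : Type*} [MeasurableSpace Ω] (μ : Measure Ω) [IsProbabilityMeasure μ]
    (W : Ω → ℝ) (α β : ℝ) (hα : 2 < α) (hβ : 0 < β)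
    (hW : ∀ ω, 0 ≤ W ω)
    (hLaplace : ∀ θ : ℝ, 0 < θ →
      ∫ ω, Real.exp (-θ * W ω) ∂μ =
        Real.exp (-(π * Real.Gamma (1 - 2 / α)) * θ ^ (2 / α))) :
    2 * π * ∫ r in Set.Ioi (0:ℝ), (μ {ω | W ω < r ^ (-α) / β}).toReal * r =
      Real.sin (π * (2 / α)) / (π * (2 / α)) * β ^ (-(2 / α)) := by
  have hα0 : 0 < α := by linarith
  set γ : ℝ := 2 / α with hγdef
  have hγ0 : 0 < γ := by positivity
  have hγ1 : γ < 1 := by rw [hγdef, div_lt_one hα0]; linarith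
  set C : ℝ := π * Real.Gamma (1 - γ) with hCdef
  have hΓ1γ : 0 < Real.Gamma (1 - γ) := Real.Gamma_pos_of_pos (by linarith)
  have hΓγ : 0 < Real.Gamma γ := Real.Gamma_pos_of_pos hγ0
  have hC : 0 < C := mul_pos Real.pi_pos hΓ1γ
  -- integrability of the Laplace integrand
  have hintW : ∀ θ : ℝ, 0 < θ → Integrable (fun ω => Real.exp (-θ * W ω)) μ := by
    intro θ hθ
    by_contra h
    have h2 := hLaplace θ hθ
    rw [integral_undef h] at h2
    exact (Real.exp_pos _).ne' h2.symm
  have hmW : AEMeasurable W μ := by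
    have h1 : AEMeasurable (fun ω => Real.exp (-1 * W ω)) μ := (hintW 1 one_pos).aemeasurable
    have h2 : AEMeasurable (fun ω => -Real.log (Real.exp (-1 * W ω))) μ :=
      (Real.measurable_log.neg).comp_aemeasurable h1
    simpa [Real.log_exp] using h2
  set g : Ω → ℝ := hmW.mk W with hgdef
  have hg : Measurable g := hmW.measurable_mk
  have hWg : W =ᵐ[μ] g := hmW.ae_eq_mk
  have hset : ∀ c : ℝ, μ {ω | W ω < c} = μ {ω | g ω < c} := fun c =>
    measure_congr (hWg.mono fun ω h => by change (W ω < c) = (g ω < c); rw [h])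
  have hLg : ∀ θ : ℝ, 0 < θ → ∫ ω, Real.exp (-θ * g ω) ∂μ = Real.exp (-C * θ ^ γ) := by
    intro θ hθ
    rw [← integral_congr_ae (hWg.mono fun ω h => show Real.exp (-θ * W ω) = Real.exp (-θ * g ω) by rw [h])]
    exact hLaplace θ hθ
  have hintg : ∀ θ : ℝ, 0 < θ → Integrable (fun ω => Real.exp (-θ * g ω)) μ :=
    fun θ hθ => (hintW θ hθ).congr (hWg.mono fun ω h => show Real.exp (-θ * W ω) = Real.exp (-θ * g ω) by rw [h])
  -- a.e. positivity of g
  have hg0 : μ {ω | g ω ≤ 0} = 0 := by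
    have hsm : MeasurableSet {ω | g ω ≤ 0} := hg measurableSet_Iic
    have hle : ∀ θ : ℝ, 0 < θ → (μ {ω | g ω ≤ 0}).toReal ≤ Real.exp (-C * θ ^ γ) := by
      intro θ hθ
      calc (μ {ω | g ω ≤ 0}).toReal = ∫ _ω in {ω | g ω ≤ 0}, (1:ℝ) ∂μ := by
            rw [setIntegral_const]; simp; rfl
        _ ≤ ∫ ω in {ω | g ω ≤ 0}, Real.exp (-θ * g ω) ∂μ := by
            refine setIntegral_mono_on (integrableOn_const (measure_ne_top μ _))
              ((hintg θ hθ).integrableOn) hsm fun ω hω => ?_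
            have hω' : g ω ≤ 0 := hω
            have : (0:ℝ) ≤ -θ * g ω := by nlinarith
            exact Real.one_le_exp this
        _ ≤ ∫ ω, Real.exp (-θ * g ω) ∂μ :=
            setIntegral_le_integral (hintg θ hθ)
              (Filter.Eventually.of_forall fun ω => (Real.exp_pos _).le)
        _ = _ := hLg θ hθ
    have htend : Filter.Tendsto (fun θ : ℝ => Real.exp (-C * θ ^ γ))
        Filter.atTop (nhds 0) := by
      refine Real.tendsto_exp_atBot.comp ?_
      have h1 : Filter.Tendsto (fun θ : ℝ => C * θ ^ γ) Filter.atTop Filter.atTop :=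
        (tendsto_rpow_atTop hγ0).const_mul_atTop hC
      have := Filter.tendsto_neg_atTop_atBot.comp h1
      refine this.congr fun θ => ?_
      simp [neg_mul]
    have hle0 : (μ {ω | g ω ≤ 0}).toReal ≤ 0 := by
      refine ge_of_tendsto htend ?_
      filter_upwards [Filter.eventually_ge_atTop (1:ℝ)] with θ hθ
      exact hle θ (by linarith)
    have h2 : (μ {ω | g ω ≤ 0}).toReal = 0 := le_antisymm hle0 ENNReal.toReal_nonneg
    exact ((ENNReal.toReal_eq_zero_iff _).1 h2).resolve_right (measure_ne_top μ _)
  have hgpos : ∀ᵐ ω ∂μ, 0 < g ω := by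
    rw [MeasureTheory.ae_iff]
    simpa [not_lt] using hg0
  -- the key expectation J = ∫⁻ g^(-γ)
  set J : ENNReal := ∫⁻ ω, ENNReal.ofReal (g ω ^ (-γ)) ∂μ with hJdef
  have hmJ : Measurable fun ω => ENNReal.ofReal (g ω ^ (-γ)) :=
    ENNReal.measurable_ofReal.comp (hg.pow_const _)
  have hJ : ENNReal.ofReal (Real.Gamma γ) * J = ENNReal.ofReal (1 / (γ * C)) := by
    rw [hJdef, ← lintegral_const_mul _ hmJ]
    have step1 : ∀ᵐ ω ∂μ, ENNReal.ofReal (Real.Gamma γ) * ENNReal.ofReal (g ω ^ (-γ)) =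
        ∫⁻ θ in Set.Ioi (0:ℝ), ENNReal.ofReal (θ ^ (γ - 1) * Real.exp (-θ * g ω)) := by
      filter_upwards [hgpos] with ω hω
      rw [← ENNReal.ofReal_mul hΓγ.le, aux_gamma_lintegral hγ0 hω]
    rw [lintegral_congr_ae step1]
    have hswap : (∫⁻ ω, (∫⁻ θ in Set.Ioi (0:ℝ),
          ENNReal.ofReal (θ ^ (γ - 1) * Real.exp (-θ * g ω))) ∂μ)
        = ∫⁻ θ in Set.Ioi (0:ℝ), ∫⁻ ω,
          ENNReal.ofReal (θ ^ (γ - 1) * Real.exp (-θ * g ω)) ∂μ := by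
      refine lintegral_lintegral_swap ?_
      refine (ENNReal.measurable_ofReal.comp ?_).aemeasurable
      exact ((measurable_snd.pow_const _).mul
        ((measurable_snd.neg.mul (hg.comp measurable_fst)).exp))
    rw [hswap]
    have step2 : (∫⁻ θ in Set.Ioi (0:ℝ), ∫⁻ ω,
          ENNReal.ofReal (θ ^ (γ - 1) * Real.exp (-θ * g ω)) ∂μ)
        = ∫⁻ θ in Set.Ioi (0:ℝ), ENNReal.ofReal (θ ^ (γ - 1) * Real.exp (-C * θ ^ γ)) := by
      refine setLIntegral_congr_fun measurableSet_Ioi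
        (fun θ hθ => ?_)
      have hθ0 : (0:ℝ) < θ := hθ
      have hmg : Measurable fun ω => ENNReal.ofReal (Real.exp (-θ * g ω)) :=
        ENNReal.measurable_ofReal.comp ((hg.const_mul (-θ)).exp)
      calc ∫⁻ ω, ENNReal.ofReal (θ ^ (γ - 1) * Real.exp (-θ * g ω)) ∂μ
          = ∫⁻ ω, ENNReal.ofReal (θ ^ (γ - 1)) * ENNReal.ofReal (Real.exp (-θ * g ω)) ∂μ := by
            refine lintegral_congr fun ω => ?_
            rw [ENNReal.ofReal_mul (Real.rpow_nonneg hθ0.le _)]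
        _ = ENNReal.ofReal (θ ^ (γ - 1)) * ∫⁻ ω, ENNReal.ofReal (Real.exp (-θ * g ω)) ∂μ :=
            lintegral_const_mul _ hmg
        _ = ENNReal.ofReal (θ ^ (γ - 1)) * ENNReal.ofReal (Real.exp (-C * θ ^ γ)) := by
            rw [← ofReal_integral_eq_lintegral_ofReal (hintg θ hθ0)
              (Filter.Eventually.of_forall fun ω => (Real.exp_pos _).le), hLg θ hθ0]
        _ = ENNReal.ofReal (θ ^ (γ - 1) * Real.exp (-C * θ ^ γ)) := by
            rw [← ENNReal.ofReal_mul (Real.rpow_nonneg hθ0.le _)]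
    rw [step2]
    have hintθ : IntegrableOn (fun θ : ℝ => θ ^ (γ - 1) * Real.exp (-C * θ ^ γ))
        (Set.Ioi 0) := by
      have := (integrableOn_Ioi_comp_rpow_iff' (fun y : ℝ => Real.exp (-C * y)) hγ0.ne').2
        (exp_neg_integrableOn_Ioi 0 hC)
      simpa [smul_eq_mul] using this
    have hnnθ : 0 ≤ᵐ[volume.restrict (Set.Ioi (0:ℝ))]
        (fun θ : ℝ => θ ^ (γ - 1) * Real.exp (-C * θ ^ γ)) := by
      refine (ae_restrict_iff' measurableSet_Ioi).2
        (Filter.Eventually.of_forall fun θ hθ => ?_)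
      have : (0:ℝ) < θ := hθ
      positivity
    rw [← ofReal_integral_eq_lintegral_ofReal hintθ hnnθ,
      integral_rpow_mul_exp_neg_mul_rpow hγ0 (by linarith) hC]
    congr 1
    rw [show γ - 1 + 1 = γ by ring, div_self hγ0.ne', Real.Gamma_one]
    rw [show -γ / γ = -1 by field_simp, Real.rpow_neg_one]
    field_simp
  have hJval : J = ENNReal.ofReal (1 / (γ * C * Real.Gamma γ)) := by
    refine (ENNReal.mul_right_inj (a := ENNReal.ofReal (Real.Gamma γ))
      (by simp [ENNReal.ofReal_eq_zero, not_le, hΓγ]) ENNReal.ofReal_ne_top).1 ?_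
    rw [hJ, ← ENNReal.ofReal_mul hΓγ.le]
    congr 1
    field_simp
  -- now the main integral
  simp only [hset]
  have hmr : Measurable fun r : ℝ => (μ {ω | g ω < r ^ (-α) / β}).toReal * r := by
    have hmono : Monotone fun c : ℝ => μ {ω | g ω < c} := fun a b hab =>
      measure_mono fun ω h => lt_of_lt_of_le h hab
    exact ((ENNReal.measurable_toReal.comp (hmono.measurable.comp
      ((measurable_id.pow_const (-α)).div_const β))).mul measurable_id)
  rw [MeasureTheory.integral_eq_lintegral_of_nonneg_ae
    ((ae_restrict_iff' measurableSet_Ioi).2 (Filter.Eventually.of_forall fun r hr =>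
      mul_nonneg ENNReal.toReal_nonneg (le_of_lt hr)))
    hmr.aestronglyMeasurable.restrict]
  have key : ∫⁻ r in Set.Ioi (0:ℝ),
      ENNReal.ofReal ((μ {ω | g ω < r ^ (-α) / β}).toReal * r)
      = ENNReal.ofReal (β ^ (-γ) / 2) * J := by
    have hS : MeasurableSet {p : ℝ × Ω | g p.2 < p.1 ^ (-α) / β} :=
      measurableSet_lt (hg.comp measurable_snd)
        ((measurable_fst.pow_const (-α)).div_const β)
    have step1 : ∫⁻ r in Set.Ioi (0:ℝ),
        ENNReal.ofReal ((μ {ω | g ω < r ^ (-α) / β}).toReal * r)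
        = ∫⁻ r in Set.Ioi (0:ℝ), ∫⁻ ω,
          (if g ω < r ^ (-α) / β then ENNReal.ofReal r else 0) ∂μ := by
      refine setLIntegral_congr_fun measurableSet_Ioi
        (fun r hr => ?_)
      have hr0 : (0:ℝ) < r := hr
      have hms : MeasurableSet {ω | g ω < r ^ (-α) / β} := hg measurableSet_Iio
      have : (fun ω => if g ω < r ^ (-α) / β then ENNReal.ofReal r else 0)
          = {ω | g ω < r ^ (-α) / β}.indicator (fun _ => ENNReal.ofReal r) := by
        funext ω; simp [Set.indicator_apply, Set.mem_setOf_eq]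
      rw [this, lintegral_indicator_const hms, ENNReal.ofReal_mul ENNReal.toReal_nonneg,
        ENNReal.ofReal_toReal (measure_ne_top μ _), mul_comm]
    rw [step1]
    have hswap : ∫⁻ r in Set.Ioi (0:ℝ), ∫⁻ ω,
          (if g ω < r ^ (-α) / β then ENNReal.ofReal r else 0) ∂μ
        = ∫⁻ ω, (∫⁻ r in Set.Ioi (0:ℝ),
          (if g ω < r ^ (-α) / β then ENNReal.ofReal r else 0)) ∂μ := by
      refine lintegral_lintegral_swap ?_
      refine Measurable.aemeasurable ?_
      exact Measurable.ite hS (ENNReal.measurable_ofReal.comp measurable_fst) measurable_const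
    rw [hswap]
    have step2 : (∫⁻ ω, (∫⁻ r in Set.Ioi (0:ℝ),
          (if g ω < r ^ (-α) / β then ENNReal.ofReal r else 0)) ∂μ)
        = ∫⁻ ω, ENNReal.ofReal (β ^ (-γ) / 2 * g ω ^ (-γ)) ∂μ := by
      refine lintegral_congr_ae ?_
      filter_upwards [hgpos] with ω hω
      have hx : (0:ℝ) < β * g ω := mul_pos hβ hω
      set R : ℝ := (β * g ω) ^ (-α⁻¹) with hRdef
      have hR : 0 < R := Real.rpow_pos_of_pos hx _
      have hRα : R ^ (-α) = β * g ω := by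
        rw [hRdef, ← Real.rpow_mul hx.le, show -α⁻¹ * -α = 1 by field_simp, Real.rpow_one]
      have hcond : ∀ r ∈ Set.Ioi (0:ℝ), (g ω < r ^ (-α) / β ↔ r < R) := by
        intro r hr
        have hr0 : (0:ℝ) < r := hr
        rw [lt_div_iff₀ hβ, mul_comm, ← hRα]
        exact Real.rpow_lt_rpow_iff_of_neg hR hr0 (by linarith)
      calc (∫⁻ r in Set.Ioi (0:ℝ), if g ω < r ^ (-α) / β then ENNReal.ofReal r else 0)
          = ∫⁻ r in Set.Ioi (0:ℝ),
              Set.indicator (Set.Iio R) (fun r => ENNReal.ofReal r) r := by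
            refine setLIntegral_congr_fun measurableSet_Ioi
              (fun r hr => ?_)
            rw [Set.indicator_apply]
            simp only [Set.mem_Iio]
            exact if_congr (hcond r hr) rfl rfl
        _ = ∫⁻ r in Set.Iio R ∩ Set.Ioi 0, ENNReal.ofReal r := by
            rw [lintegral_indicator measurableSet_Iio,
              Measure.restrict_restrict measurableSet_Iio]
        _ = ENNReal.ofReal (R ^ 2 / 2) := by
            rw [show Set.Iio R ∩ Set.Ioi (0:ℝ) = Set.Ioo 0 R from by
              rw [Set.inter_comm, Set.Ioi_inter_Iio]]
            exact aux_ioo hR.le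
        _ = ENNReal.ofReal (β ^ (-γ) / 2 * g ω ^ (-γ)) := by
            congr 1
            have h2 : R ^ 2 = (β * g ω) ^ (-γ) := by
              rw [hRdef, ← Real.rpow_natCast _ 2, ← Real.rpow_mul hx.le]
              norm_num
              rw [hγdef]
              ring_nf
            rw [h2, Real.mul_rpow hβ.le hω.le]
            ring
    rw [step2]
    calc (∫⁻ ω, ENNReal.ofReal (β ^ (-γ) / 2 * g ω ^ (-γ)) ∂μ)
        = ∫⁻ ω, ENNReal.ofReal (β ^ (-γ) / 2) * ENNReal.ofReal (g ω ^ (-γ)) ∂μ := by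
          refine lintegral_congr fun ω => ?_
          rw [ENNReal.ofReal_mul (by positivity)]
      _ = ENNReal.ofReal (β ^ (-γ) / 2) * J := lintegral_const_mul _ hmJ
  rw [key, hJval, ← ENNReal.ofReal_mul (by positivity), ENNReal.toReal_ofReal (by positivity)]
  rw [hCdef]
  have hrefl : Real.Gamma γ * Real.Gamma (1 - γ) = π / Real.sin (π * γ) :=
    Real.Gamma_mul_Gamma_one_sub γ
  have hsin : 0 < Real.sin (π * γ) := by
    apply Real.sin_pos_of_pos_of_lt_pi
    · positivity
    · nlinarith [Real.pi_pos]
  have hπ : (0:ℝ) < π := Real.pi_pos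
  have h1 : Real.Gamma γ * Real.Gamma (1 - γ) * Real.sin (π * γ) = π := by
    rw [hrefl]; field_simp
  field_simp
  linear_combination (-1 : ℝ) * h1
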